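/- arXiv:2108.12291 — 2 statements merged into one kernel-verified Lean document; each statement's English description precedes it below -/
import Mathlib

section
/- Let H be a real Hilbert space. The sine dissimilarity satisfies the triangle inequality on nonzero elements: for all nonzero u, v, w ∈ H, δ̃₁(u, w) ≤ δ̃₁(u, v) + δ̃₁(v, w). Consequently δ̃₁ is a pseudometric on H \ {0}. -/
/-- Sine dissimilarity between (nonzero) elements of a real inner product space:
`δ̃₁(u,v) = sqrt(1 - ⟨u,v⟩² / (‖u‖²‖v‖²))`. -/
noncomputable def sineDissim {H : Type*} [NormedAddCommGroup H] [InnerProductSpace ℝ H]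
    (u v : H) : ℝ :=
  Real.sqrt (1 - (inner ℝ u v : ℝ) ^ 2 / (‖u‖ ^ 2 * ‖v‖ ^ 2))

/-- Relative projection error of `u` onto the subspace `K`:
`η(u, K) = ‖u - π_K(u)‖ / ‖u‖`. -/
noncomputable def relProjError {H : Type*} [NormedAddCommGroup H] [InnerProductSpace ℝ H]
    (u : H) (K : Submodule ℝ H) [K.HasOrthogonalProjection] : ℝ :=
  ‖u - (K.orthogonalProjectionOnto u : H)‖ / ‖u‖

/-!
Scaled by `‖u‖`, the sine dissimilarity `δ̃₁(u, w)` is the distance from `u` to the line `ℝ w`,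
attained at the orthogonal projection `(⟪u, w⟫ / ‖w‖²) • w`. Writing `s = ⟪u, v⟫ / ‖v‖²` and
`r = ⟪v, w⟫ / ‖w‖²`, the point `(s r) • w` of the line `ℝ w` satisfies
`u - (s r) • w = (u - s • v) + s • (v - r • w)`, so
`‖u‖ δ̃₁(u, w) ≤ ‖u‖ δ̃₁(u, v) + |s| ‖v‖ δ̃₁(v, w)`, and `|s| ‖v‖ ≤ ‖u‖` by Cauchy–Schwarz.
-/

open RealInnerProductSpace

section

variable {H : Type*} [NormedAddCommGroup H] [InnerProductSpace ℝ H]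

theorem sineDissim_nonneg (u w : H) : 0 ≤ sineDissim u w :=
  Real.sqrt_nonneg _

theorem real_inner_sq_div_le_one (u w : H) : ⟪u, w⟫ ^ 2 / (‖u‖ ^ 2 * ‖w‖ ^ 2) ≤ 1 := by
  rw [← mul_pow, ← div_pow, ← sq_abs]
  exact pow_le_one₀ (abs_nonneg _) (abs_real_inner_div_norm_mul_norm_le_one u w)

theorem sq_norm_mul_sineDissim (u w : H) :
    (‖u‖ * sineDissim u w) ^ 2 = ‖u‖ ^ 2 - ⟪u, w⟫ ^ 2 / ‖w‖ ^ 2 := by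
  rw [mul_pow, sineDissim, Real.sq_sqrt (sub_nonneg.mpr (real_inner_sq_div_le_one u w))]
  rcases eq_or_ne u 0 with rfl | hu
  · simp
  · field_simp

theorem norm_mul_sineDissim_le_norm_sub_smul (u w : H) (t : ℝ) :
    ‖u‖ * sineDissim u w ≤ ‖u - t • w‖ := by
  refine (sq_le_sq₀ (mul_nonneg (norm_nonneg u) (sineDissim_nonneg u w)) (norm_nonneg _)).mp ?_
  rw [sq_norm_mul_sineDissim, norm_sub_sq_real, real_inner_smul_right, norm_smul,
    Real.norm_eq_abs, mul_pow, sq_abs]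
  rcases eq_or_ne w 0 with rfl | hw
  · simp
  · have hw' : 0 < ‖w‖ := norm_pos_iff.mpr hw
    have expand : (t * ‖w‖ - ⟪u, w⟫ / ‖w‖) ^ 2 =
        t ^ 2 * ‖w‖ ^ 2 - 2 * (t * ⟪u, w⟫) + ⟪u, w⟫ ^ 2 / ‖w‖ ^ 2 := by
      field_simp
      ring
    linarith [sq_nonneg (t * ‖w‖ - ⟪u, w⟫ / ‖w‖)]

theorem norm_mul_sineDissim_eq_norm_sub_smul (u w : H) :
    ‖u‖ * sineDissim u w = ‖u - (⟪u, w⟫ / ‖w‖ ^ 2) • w‖ := by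
  refine (sq_eq_sq₀ (mul_nonneg (norm_nonneg u) (sineDissim_nonneg u w)) (norm_nonneg _)).mp ?_
  rw [sq_norm_mul_sineDissim, norm_sub_sq_real, real_inner_smul_right, norm_smul,
    Real.norm_eq_abs, mul_pow, sq_abs]
  rcases eq_or_ne w 0 with rfl | hw
  · simp
  · have hw' : ‖w‖ ≠ 0 := norm_ne_zero_iff.mpr hw
    field_simp
    ring

theorem sineDissim_comm (u v : H) : sineDissim u v = sineDissim v u := by
  rw [sineDissim, sineDissim, real_inner_comm, mul_comm]

theorem sineDissim_self {u : H} (hu : u ≠ 0) : sineDissim u u = 0 := by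
  have hu' : ‖u‖ ≠ 0 := norm_ne_zero_iff.mpr hu
  rw [sineDissim, real_inner_self_eq_norm_sq, ← sq, div_self (by positivity), sub_self,
    Real.sqrt_zero]

theorem sineDissim_triangle (u v w : H) :
    sineDissim u w ≤ sineDissim u v + sineDissim v w := by
  rcases eq_or_ne u 0 with rfl | hu
  · -- `sineDissim 0 x = 1`, since division by `0` gives `0`
    simp [sineDissim, Real.sqrt_nonneg]
  set s := ⟪u, v⟫ / ‖v‖ ^ 2
  set r := ⟪v, w⟫ / ‖w‖ ^ 2
  have hs : |s| * ‖v‖ ≤ ‖u‖ := by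
    rcases eq_or_ne v 0 with rfl | hv
    · simp
    have hv' : 0 < ‖v‖ := norm_pos_iff.mpr hv
    rw [abs_div, abs_of_pos (by positivity : 0 < ‖v‖ ^ 2), div_mul_eq_mul_div,
      div_le_iff₀ (by positivity)]
    calc |⟪u, v⟫| * ‖v‖ ≤ ‖u‖ * ‖v‖ * ‖v‖ := by
          gcongr; exact abs_real_inner_le_norm u v
      _ = ‖u‖ * ‖v‖ ^ 2 := by ring
  have hdecomp : u - (s * r) • w = (u - s • v) + s • (v - r • w) := by
    rw [smul_sub, mul_smul]; abel
  have hmain : ‖u‖ * sineDissim u w ≤ ‖u‖ * (sineDissim u v + sineDissim v w) :=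
    calc ‖u‖ * sineDissim u w ≤ ‖u - (s * r) • w‖ :=
          norm_mul_sineDissim_le_norm_sub_smul u w _
      _ ≤ ‖u - s • v‖ + |s| * ‖v - r • w‖ := by
          rw [hdecomp, ← Real.norm_eq_abs, ← norm_smul]; exact norm_add_le _ _
      _ = ‖u‖ * sineDissim u v + |s| * ‖v‖ * sineDissim v w := by
          rw [mul_assoc, norm_mul_sineDissim_eq_norm_sub_smul u v,
            norm_mul_sineDissim_eq_norm_sub_smul v w]
      _ ≤ ‖u‖ * sineDissim u v + ‖u‖ * sineDissim v w := by
          gcongr; exact sineDissim_nonneg v w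
      _ = ‖u‖ * (sineDissim u v + sineDissim v w) := by ring
  exact le_of_mul_le_mul_left hmain (norm_pos_iff.mpr hu)

end

theorem sineDissim_triangle_and_pseudometric_general
    {H : Type*} [NormedAddCommGroup H] [InnerProductSpace ℝ H] :
    (∀ u v w : H, u ≠ 0 → v ≠ 0 → w ≠ 0 →
      sineDissim u w ≤ sineDissim u v + sineDissim v w) ∧
    (∀ u : {x : H // x ≠ 0}, sineDissim u.1 u.1 = 0) ∧
    (∀ u v : {x : H // x ≠ 0}, sineDissim u.1 v.1 = sineDissim v.1 u.1) ∧
    (∀ u v w : {x : H // x ≠ 0},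
      sineDissim u.1 w.1 ≤ sineDissim u.1 v.1 + sineDissim v.1 w.1) :=
  ⟨fun u v w _ _ _ => sineDissim_triangle u v w, fun u => sineDissim_self u.2,
    fun u v => sineDissim_comm u.1 v.1, fun u v w => sineDissim_triangle u.1 v.1 w.1⟩

/-- The sine dissimilarity satisfies the triangle inequality on nonzero
elements; consequently (being also zero on the diagonal and symmetric) it is a
pseudometric on `H \ {0}`. -/
theorem sineDissim_triangle_and_pseudometric
    {H : Type*} [NormedAddCommGroup H] [InnerProductSpace ℝ H] [CompleteSpace H] :
    (∀ u v w : H, u ≠ 0 → v ≠ 0 → w ≠ 0 →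
      sineDissim u w ≤ sineDissim u v + sineDissim v w) ∧
    (∀ u : {x : H // x ≠ 0}, sineDissim u.1 u.1 = 0) ∧
    (∀ u v : {x : H // x ≠ 0}, sineDissim u.1 v.1 = sineDissim v.1 u.1) ∧
    (∀ u v w : {x : H // x ≠ 0},
      sineDissim u.1 w.1 ≤ sineDissim u.1 v.1 + sineDissim v.1 w.1) :=
  sineDissim_triangle_and_pseudometric_general
end

section
/- Let H be a real Hilbert space, let M̂ = {u_1, …, u_m} be a finite set of nonzero elements of H, and let K ≥ 2. For every partition {P_k}_{1≤k≤K} of M̂ and for every choice of representatives ũ_k ∈ M̂, the K-1-ROM-dictionary cost equals the k-medoids cost with the sine dissimilarity: Σ_{k=1}^{K} Σ_{i=1}^{m} 1_{P_k}(u_i) · η(u_i, span{ũ_k})² = Σ_{k=1}^{K} Σ_{i=1}^{m} 1_{P_k}(u_i) · δ̃₁(u_i, ũ_k)². Consequently, a partition of M̂ minimizes min_{ũ_1,…,ũ_K ∈ M̂} Σ_k Σ_i 1_{P_k}(u_i) η(u_i, span{ũ_k})² if and only if it minimizes the k-medoids clustering cost min_{ũ_1,…,ũ_K ∈ M̂}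 Σ_k Σ_i 1_{P_k}(u_i) δ̃₁(u_i, ũ_k)². -/
/-- `P` is a partition (into `K` nonempty, pairwise disjoint, covering subsets) of `M`. -/
def IsPartitionOf {H : Type*} {K : ℕ} (P : Fin K → Set H) (M : Set H) : Prop :=
  (∀ k, (P k).Nonempty) ∧ (∀ k, P k ⊆ M) ∧
    (∀ k l, k ≠ l → Disjoint (P k) (P l)) ∧ (⋃ k, P k) = M

/-- The `K`-`1`-ROM-dictionary cost of a partition `P` of the snapshot set `{u i}`:
`min_{ũ₁,…,ũ_K ∈ M̂} Σ_k Σ_i 1_{P_k}(u_i) · η(u_i, span{ũ_k})²`. -/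
noncomputable def dictROMCost {H : Type*} [NormedAddCommGroup H] [InnerProductSpace ℝ H]
    {m K : ℕ} (u : Fin m → H) (P : Fin K → Set H) : ℝ :=
  ⨅ t : Fin K → Fin m, ∑ k : Fin K, ∑ i : Fin m,
    (P k).indicator
      (fun _ => relProjError (u i) (Submodule.span ℝ {u (t k)}) ^ 2) (u i)

/-- The k-medoids clustering cost of a partition `P` of the snapshot set `{u i}` for the
sine dissimilarity: `min_{ũ₁,…,ũ_K ∈ M̂} Σ_k Σ_i 1_{P_k}(u_i) · δ̃₁(u_i, ũ_k)²`. -/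
noncomputable def kMedoidsCost {H : Type*} [NormedAddCommGroup H] [InnerProductSpace ℝ H]
    {m K : ℕ} (u : Fin m → H) (P : Fin K → Set H) : ℝ :=
  ⨅ t : Fin K → Fin m, ∑ k : Fin K, ∑ i : Fin m,
    (P k).indicator (fun _ => sineDissim (u i) (u (t k)) ^ 2) (u i)

/-! The projection of `u` onto `ℝ ∙ v` is `(⟪v, u⟫ / ‖v‖²) • v`, so Pythagoras gives
`η(u, ℝ ∙ v)² = 1 - ⟪u, v⟫² / (‖u‖²‖v‖²) = δ̃₁(u, v)²`. The two costs therefore agree summand by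
summand, for every choice of representatives, and so do their minimizers. -/

section SpanSingleton

open scoped InnerProductSpace

variable {H : Type*} [NormedAddCommGroup H] [InnerProductSpace ℝ H]

-- For `v = 0` both sides equal `‖u‖ ^ 2`, thanks to `x / 0 = 0`.
lemma norm_sub_starProjection_span_singleton_sq (u v : H) :
    ‖u - (ℝ ∙ v).starProjection u‖ ^ 2 = ‖u‖ ^ 2 - ⟪u, v⟫_ℝ ^ 2 / ‖v‖ ^ 2 := by
  rcases eq_or_ne v 0 with rfl | hv
  · simp
  have hv' : ‖v‖ ≠ 0 := norm_ne_zero_iff.mpr hv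
  rw [Submodule.starProjection_singleton, norm_sub_sq_real, inner_smul_right, norm_smul,
    mul_pow, Real.norm_eq_abs, sq_abs, real_inner_comm v u]
  simp only [RCLike.ofReal_real_eq_id, id_eq]
  field_simp
  ring

lemma sineDissim_sq (u v : H) :
    sineDissim u v ^ 2 = 1 - ⟪u, v⟫_ℝ ^ 2 / (‖u‖ ^ 2 * ‖v‖ ^ 2) := by
  refine Real.sq_sqrt (sub_nonneg.mpr (div_le_one_of_le₀ ?_ (by positivity)))
  rw [← mul_pow, ← sq_abs]
  exact pow_le_pow_left₀ (abs_nonneg _) (abs_real_inner_le_norm u v) 2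

lemma relProjError_span_singleton_sq {u : H} (hu : u ≠ 0) (v : H) :
    relProjError u (ℝ ∙ v) ^ 2 = sineDissim u v ^ 2 := by
  have hu' : ‖u‖ ≠ 0 := norm_ne_zero_iff.mpr hu
  rw [relProjError, div_pow, ← Submodule.starProjection_apply,
    norm_sub_starProjection_span_singleton_sq, sineDissim_sq]
  field_simp

end SpanSingleton

section Cost

variable {H : Type*} [NormedAddCommGroup H] [InnerProductSpace ℝ H] {m K : ℕ}
  {u : Fin m → H}

lemma sum_indicator_relProjError_eq_sum_indicator_sineDissim (hu : ∀ i, u i ≠ 0)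
    (P : Fin K → Set H) (t : Fin K → Fin m) :
    ∑ k : Fin K, ∑ i : Fin m,
        (P k).indicator (fun _ => relProjError (u i) (ℝ ∙ u (t k)) ^ 2) (u i)
      = ∑ k : Fin K, ∑ i : Fin m,
        (P k).indicator (fun _ => sineDissim (u i) (u (t k)) ^ 2) (u i) := by
  simp only [relProjError_span_singleton_sq (hu _)]

lemma dictROMCost_eq_kMedoidsCost (hu : ∀ i, u i ≠ 0) (P : Fin K → Set H) :
    dictROMCost u P = kMedoidsCost u P :=
  iInf_congr (sum_indicator_relProjError_eq_sum_indicator_sineDissim hu P)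

end Cost

theorem dictROMCost_eq_kMedoidsCost_and_minimizers_iff_general
    {H : Type*} [NormedAddCommGroup H] [InnerProductSpace ℝ H]
    {m K : ℕ} (u : Fin m → H) (hu : ∀ i, u i ≠ 0)
    (P : Fin K → Set H) :
    (∀ t : Fin K → Fin m,
      ∑ k : Fin K, ∑ i : Fin m,
        (P k).indicator
          (fun _ => relProjError (u i) (Submodule.span ℝ {u (t k)}) ^ 2) (u i)
      = ∑ k : Fin K, ∑ i : Fin m,
        (P k).indicator (fun _ => sineDissim (u i) (u (t k)) ^ 2) (u i)) ∧
    ((∀ P' : Fin K → Set H, IsPartitionOf P' (Set.range u) →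
        dictROMCost u P ≤ dictROMCost u P') ↔
      (∀ P' : Fin K → Set H, IsPartitionOf P' (Set.range u) →
        kMedoidsCost u P ≤ kMedoidsCost u P')) := by
  refine ⟨sum_indicator_relProjError_eq_sum_indicator_sineDissim hu P, ?_⟩
  simp only [dictROMCost_eq_kMedoidsCost hu]

/-- For a finite set `M̂ = {u₁, …, u_m}` of nonzero elements of a real Hilbert
space and `K ≥ 2`: for every partition `{P_k}` of `M̂` and every choice of representatives
`ũ_k = u (t k) ∈ M̂`, the `K`-`1`-ROM-dictionary cost equals the k-medoids cost with the
sine dissimilarity; consequently, a partition minimizes the former cost (minimized over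
representatives) iff it minimizes the k-medoids clustering cost. -/
theorem dictROMCost_eq_kMedoidsCost_and_minimizers_iff
    {H : Type*} [NormedAddCommGroup H] [InnerProductSpace ℝ H] [CompleteSpace H]
    {m K : ℕ} (hK : 2 ≤ K) (u : Fin m → H) (hu : ∀ i, u i ≠ 0)
    (P : Fin K → Set H) (hP : IsPartitionOf P (Set.range u)) :
    (∀ t : Fin K → Fin m,
      ∑ k : Fin K, ∑ i : Fin m,
        (P k).indicator
          (fun _ => relProjError (u i) (Submodule.span ℝ {u (t k)}) ^ 2) (u i)
      = ∑ k : Fin K, ∑ i : Fin m,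
        (P k).indicator (fun _ => sineDissim (u i) (u (t k)) ^ 2) (u i)) ∧
    ((∀ P' : Fin K → Set H, IsPartitionOf P' (Set.range u) →
        dictROMCost u P ≤ dictROMCost u P') ↔
      (∀ P' : Fin K → Set H, IsPartitionOf P' (Set.range u) →
        kMedoidsCost u P ≤ kMedoidsCost u P')) :=
  dictROMCost_eq_kMedoidsCost_and_minimizers_iff_general u hu P
end
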